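/- arXiv:2103.03520 — 3 statements merged into one kernel-verified Lean document; each statement's English description precedes it below -/
import Mathlib

section
/- Let P be an n×n real symmetric positive definite matrix with largest eigenvalue λ_max(P). Then the map θ ↦ γ(P,θ) := (1/2)·(log det(I − θP) + tr((I − θP)^{-1} − I)) is well defined on [0, 1/λ_max(P)) (i.e., I − θP is positive definite there), satisfies γ(P,0) = 0, is strictly monotone increasing on [0, 1/λ_max(P)), and γ(P,θ) → +∞ as θ → (1/λ_max(P))⁻. -/
/-!
Diagonalising `P = U diag(λ) Uᴴ` conjugates `I − θP` to `diag(1 − θλᵢ)`, so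
`γ(P,θ) = ½ ∑ᵢ φ(1 − θλᵢ)` with `φ(u) = log u + u⁻¹ − 1`. On `(0, 1]` the function `φ` is
strictly decreasing (by `log x < x − 1`), vanishes at `1`, and blows up at `0⁺` because
`u log u → 0`. For `θ ∈ [0, 1/λmax)` every `1 − θλᵢ` lies in `(0, 1]` and decreases in `θ`,
and the term belonging to `λmax` tends to `0⁺` as `θ → 1/λmax`.
-/

open Matrix Filter Set

/-- The tolerance function `γ(P,θ) = (1/2)(log det(I−θP) + tr((I−θP)⁻¹ − I))` of the
robust extended Kalman filter. -/
noncomputable def gammaTol {n : ℕ} (P : Matrix (Fin n) (Fin n) ℝ) (θ : ℝ) : ℝ :=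
  (1 / 2) * (Real.log ((1 : Matrix (Fin n) (Fin n) ℝ) - θ • P).det
    + Matrix.trace (((1 : Matrix (Fin n) (Fin n) ℝ) - θ • P)⁻¹ - 1))

open scoped Topology

namespace Matrix

section UnitaryConj

variable {n α : Type*} [Fintype n] [DecidableEq n] [CommRing α] [StarRing α]

lemma star_coe_unitary_eq_inv (u : unitary (Matrix n n α)) :
    star (u : Matrix n n α) = (u : Matrix n n α)⁻¹ :=
  (inv_eq_right_inv (Unitary.coe_mul_star_self u)).symm

lemma det_conjStarAlgAut (u : unitary (Matrix n n α)) (M : Matrix n n α) :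
    (Unitary.conjStarAlgAut α _ u M).det = M.det := by
  rw [Unitary.conjStarAlgAut_apply, star_coe_unitary_eq_inv, det_conj Unitary.isUnit_coe]

lemma trace_conjStarAlgAut (u : unitary (Matrix n n α)) (M : Matrix n n α) :
    (Unitary.conjStarAlgAut α _ u M).trace = M.trace := by
  rw [Unitary.conjStarAlgAut_apply, star_coe_unitary_eq_inv, trace_conj Unitary.isUnit_coe]

lemma inv_conjStarAlgAut (u : unitary (Matrix n n α)) (M : Matrix n n α) :
    (Unitary.conjStarAlgAut α _ u M)⁻¹ = Unitary.conjStarAlgAut α _ u M⁻¹ := by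
  have hu : IsUnit (u : Matrix n n α).det := (isUnit_iff_isUnit_det _).mp Unitary.isUnit_coe
  rw [Unitary.conjStarAlgAut_apply, Unitary.conjStarAlgAut_apply, star_coe_unitary_eq_inv,
    mul_inv_rev, mul_inv_rev, nonsing_inv_nonsing_inv _ hu, Matrix.mul_assoc]

end UnitaryConj

open scoped ComplexOrder in
lemma PosDef.conjStarAlgAut {n 𝕜 : Type*} [Fintype n] [DecidableEq n] [RCLike 𝕜]
    {M : Matrix n n 𝕜} (hM : M.PosDef) (u : unitary (Matrix n n 𝕜)) :
    (Unitary.conjStarAlgAut 𝕜 _ u M).PosDef := by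
  rw [Unitary.conjStarAlgAut_apply, star_eq_conjTranspose]
  exact hM.mul_mul_conjTranspose_same (vecMul_injective_iff_isUnit.mpr Unitary.isUnit_coe)

lemma IsHermitian.one_sub_smul_eq_conjStarAlgAut {n : Type*} [Fintype n] [DecidableEq n]
    {A : Matrix n n ℝ} (hA : A.IsHermitian) (θ : ℝ) :
    1 - θ • A = Unitary.conjStarAlgAut ℝ _ hA.eigenvectorUnitary
      (diagonal fun i => 1 - θ * hA.eigenvalues i) := by
  conv_lhs => rw [hA.spectral_theorem,
    ← map_one (Unitary.conjStarAlgAut ℝ _ hA.eigenvectorUnitary), ← map_smul, ← map_sub]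
  congr 1
  ext i j
  by_cases h : i = j <;> simp [h]

end Matrix

noncomputable def gammaTerm (u : ℝ) : ℝ := Real.log u + (u⁻¹ - 1)

lemma gammaTol_eq_sum_gammaTerm {n : ℕ} {P : Matrix (Fin n) (Fin n) ℝ} (hP : P.IsHermitian)
    {θ : ℝ} (hθ : ∀ i, 1 - θ * hP.eigenvalues i ≠ 0) :
    gammaTol P θ = (1 / 2) * ∑ i, gammaTerm (1 - θ * hP.eigenvalues i) := by
  have hinv : (diagonal fun i => 1 - θ * hP.eigenvalues i)⁻¹
      = diagonal fun i => (1 - θ * hP.eigenvalues i)⁻¹ := by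
    refine inv_eq_left_inv ?_
    rw [diagonal_mul_diagonal, ← diagonal_one]
    exact congrArg diagonal (funext fun i => inv_mul_cancel₀ (hθ i))
  rw [gammaTol, hP.one_sub_smul_eq_conjStarAlgAut, det_conjStarAlgAut, inv_conjStarAlgAut,
    ← map_one (Unitary.conjStarAlgAut ℝ _ hP.eigenvectorUnitary), ← map_sub,
    trace_conjStarAlgAut, hinv, det_diagonal, Real.log_prod (fun i _ => hθ i), ← diagonal_one,
    diagonal_sub, trace_diagonal, ← Finset.sum_add_distrib]
  rfl

lemma gammaTerm_one : gammaTerm 1 = 0 := by simp [gammaTerm]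

lemma strictAntiOn_gammaTerm : StrictAntiOn gammaTerm (Ioc 0 1) := by
  intro u hu v hv huv
  have hlog : Real.log (v / u) < v / u - 1 := Real.log_lt_sub_one_of_pos (div_pos hv.1 hu.1)
    (by rw [ne_eq, div_eq_one_iff_eq hu.1.ne']; exact huv.ne')
  rw [Real.log_div hv.1.ne' hu.1.ne'] at hlog
  have hquot : v / u - 1 ≤ u⁻¹ - v⁻¹ := by
    rw [div_sub_one hu.1.ne', inv_sub_inv hu.1.ne' hv.1.ne']
    exact div_le_div_of_nonneg_left (by linarith) (mul_pos hu.1 hv.1)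
      (mul_le_of_le_one_right hu.1.le hv.2)
  simp only [gammaTerm]
  linarith

lemma gammaTerm_nonneg {u : ℝ} (hu : u ∈ Ioc 0 1) : 0 ≤ gammaTerm u :=
  gammaTerm_one ▸ strictAntiOn_gammaTerm.antitoneOn hu ⟨one_pos, le_rfl⟩ hu.2

lemma tendsto_gammaTerm_nhdsGT_zero : Tendsto gammaTerm (𝓝[>] 0) atTop := by
  have hfactor : Tendsto (fun u : ℝ => 1 + u * Real.log u - u) (𝓝[>] 0) (𝓝 1) := by
    have hcont : Continuous fun u : ℝ => 1 + u * Real.log u - u :=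
      (continuous_const.add Real.continuous_mul_log).sub continuous_id
    exact (hcont.tendsto' 0 1 (by simp)).mono_left nhdsWithin_le_nhds
  refine (tendsto_inv_nhdsGT_zero.atTop_mul_pos one_pos hfactor).congr' ?_
  filter_upwards [self_mem_nhdsWithin] with u (hu : 0 < u)
  rw [gammaTerm]
  field_simp
  ring

lemma one_sub_mul_mem_Ioc {θ l L : ℝ} (hl : 0 < l) (hlL : l ≤ L) (hθ : θ ∈ Ico 0 (1 / L)) :
    1 - θ * l ∈ Ioc 0 1 := by
  have hθL : θ * L < 1 := (lt_div_iff₀ (hl.trans_le hlL)).mp hθ.2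
  constructor <;> nlinarith [hθ.1]

lemma tendsto_one_sub_mul_nhdsLT_one_div {L : ℝ} (hL : 0 < L) :
    Tendsto (fun θ => 1 - θ * L) (𝓝[<] (1 / L)) (𝓝[>] 0) := by
  refine tendsto_nhdsWithin_of_tendsto_nhds_of_eventually_within _ ?_ ?_
  · have hcont : Continuous fun θ : ℝ => 1 - θ * L := by fun_prop
    exact (hcont.tendsto' _ _ (by field_simp; ring)).mono_left nhdsWithin_le_nhds
  · filter_upwards [self_mem_nhdsWithin] with θ hθ
    have := (lt_div_iff₀ hL).mp hθ
    simp only [mem_Ioi]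
    linarith

theorem gammaTol_wellDefined_zero_strictMono_tendsto_general
    {n : ℕ} (P : Matrix (Fin n) (Fin n) ℝ) (hP : P.PosDef)
    (lmax : ℝ) (hlmax : IsGreatest (Set.range hP.1.eigenvalues) lmax) :
    (∀ θ ∈ Set.Ico (0 : ℝ) (1 / lmax),
        ((1 : Matrix (Fin n) (Fin n) ℝ) - θ • P).PosDef) ∧
    gammaTol P 0 = 0 ∧
    StrictMonoOn (gammaTol P) (Set.Ico (0 : ℝ) (1 / lmax)) ∧
    Tendsto (gammaTol P) (nhdsWithin (1 / lmax) (Set.Iio (1 / lmax))) atTop := by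
  obtain ⟨⟨i₀, hi₀⟩, hle⟩ := hlmax
  have hmem : ∀ θ ∈ Ico (0 : ℝ) (1 / lmax), ∀ i, 1 - θ * hP.1.eigenvalues i ∈ Ioc 0 1 :=
    fun θ hθ i => one_sub_mul_mem_Ioc (hP.eigenvalues_pos i) (hle ⟨i, rfl⟩) hθ
  have hγ : ∀ θ ∈ Ico (0 : ℝ) (1 / lmax),
      gammaTol P θ = (1 / 2) * ∑ i, gammaTerm (1 - θ * hP.1.eigenvalues i) :=
    fun θ hθ => gammaTol_eq_sum_gammaTerm hP.1 fun i => (hmem θ hθ i).1.ne'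
  refine ⟨fun θ hθ => ?_, by simp [gammaTol], fun a ha b hb hab => ?_, ?_⟩
  · rw [hP.1.one_sub_smul_eq_conjStarAlgAut]
    exact (PosDef.diagonal fun i => (hmem θ hθ i).1).conjStarAlgAut _
  · rw [hγ a ha, hγ b hb]
    refine mul_lt_mul_of_pos_left (Finset.sum_lt_sum_of_nonempty ⟨i₀, Finset.mem_univ _⟩
      fun i _ => strictAntiOn_gammaTerm (hmem b hb i) (hmem a ha i) ?_) one_half_pos
    nlinarith [hP.eigenvalues_pos i]
  · have hlmax_pos : 0 < lmax := hi₀ ▸ hP.eigenvalues_pos i₀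
    have hlower : ∀ θ ∈ Ico (0 : ℝ) (1 / lmax),
        (1 / 2) * gammaTerm (1 - θ * lmax) ≤ gammaTol P θ := fun θ hθ => by
      rw [hγ θ hθ, ← hi₀]
      gcongr
      exact Finset.single_le_sum (fun i _ => gammaTerm_nonneg (hmem θ hθ i)) (Finset.mem_univ i₀)
    refine tendsto_atTop_mono' _ ?_ ((tendsto_gammaTerm_nhdsGT_zero.comp
      (tendsto_one_sub_mul_nhdsLT_one_div hlmax_pos)).const_mul_atTop one_half_pos)
    filter_upwards [Ico_mem_nhdsLT (one_div_pos.mpr hlmax_pos)] with θ hθ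
    exact hlower θ hθ

/-- For a real symmetric positive definite `P` with largest eigenvalue `λmax`,
the map `θ ↦ γ(P,θ)` is well defined on `[0, 1/λmax)` (there `I − θP` is positive
definite), vanishes at `θ = 0`, is strictly monotone increasing on `[0, 1/λmax)`,
and tends to `+∞` as `θ → (1/λmax)⁻`. -/
theorem gammaTol_wellDefined_zero_strictMono_tendsto
    {n : ℕ} (hn : 0 < n) (P : Matrix (Fin n) (Fin n) ℝ) (hP : P.PosDef)
    (lmax : ℝ) (hlmax : IsGreatest (Set.range hP.1.eigenvalues) lmax) :
    (∀ θ ∈ Set.Ico (0 : ℝ) (1 / lmax),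
        ((1 : Matrix (Fin n) (Fin n) ℝ) - θ • P).PosDef) ∧
    gammaTol P 0 = 0 ∧
    StrictMonoOn (gammaTol P) (Set.Ico (0 : ℝ) (1 / lmax)) ∧
    Tendsto (gammaTol P) (nhdsWithin (1 / lmax) (Set.Iio (1 / lmax))) atTop :=
  gammaTol_wellDefined_zero_strictMono_tendsto_general P hP lmax hlmax
end

section
/- Let P be an n×n real symmetric positive definite matrix, and for c > 0 let θ(c) denote the unique value in (0, 1/λ_max(P)) satisfying γ(P, θ(c)) = c, where γ(P,θ) = (1/2)·(log det(I − θP) + tr((I − θP)^{-1} − I)). Then c ↦ θ(c) is strictly monotone increasing on (0, ∞). -/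
open Matrix Set

noncomputable def gammaTolTerm (x : ℝ) : ℝ :=
  Real.log (1 - x) + (1 - x)⁻¹ - 1

theorem gammaTolTerm_strictMonoOn : StrictMonoOn gammaTolTerm (Ico 0 1) := by
  intro a ha b hb hab
  have hb' : 0 < 1 - b := sub_pos.2 hb.2
  have ha' : 0 < 1 - a := by linarith
  have hba : 1 - b < 1 - a := by linarith
  have key : Real.log (1 - a) - Real.log (1 - b) < (1 - b)⁻¹ - (1 - a)⁻¹ :=
    calc Real.log (1 - a) - Real.log (1 - b) = Real.log ((1 - a) / (1 - b)) :=
          (Real.log_div ha'.ne' hb'.ne').symm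
      _ < (1 - a) / (1 - b) - 1 :=
          Real.log_lt_sub_one_of_pos (div_pos ha' hb') ((one_lt_div hb').2 hba).ne'
      _ = ((1 - a) - (1 - b)) / (1 - b) := by rw [div_sub_one hb'.ne']
      _ ≤ ((1 - a) - (1 - b)) / ((1 - b) * (1 - a)) := by
          gcongr ?_ / ?_
          · linarith
          · nlinarith [ha.1]
      _ = (1 - b)⁻¹ - (1 - a)⁻¹ := by rw [inv_sub_inv hb'.ne' ha'.ne']
  unfold gammaTolTerm
  linarith

namespace Matrix.IsHermitian

variable {𝕜 n : Type*} [RCLike 𝕜] [Fintype n] [DecidableEq n] {A : Matrix n n 𝕜}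

lemma det_cfc (hA : A.IsHermitian) (f : ℝ → ℝ) :
    (cfc f A).det = ∏ i, (f (hA.eigenvalues i) : 𝕜) := by
  rw [hA.cfc_eq, IsHermitian.cfc, Unitary.conjStarAlgAut_apply, det_mul_comm, ← Matrix.mul_assoc,
    Unitary.coe_star_mul_self, Matrix.one_mul, det_diagonal]
  rfl

lemma trace_cfc (hA : A.IsHermitian) (f : ℝ → ℝ) :
    (cfc f A).trace = ∑ i, (f (hA.eigenvalues i) : 𝕜) := by
  rw [hA.cfc_eq, IsHermitian.cfc, Unitary.conjStarAlgAut_apply, trace_mul_comm, ← Matrix.mul_assoc,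
    Unitary.coe_star_mul_self, Matrix.one_mul, trace_diagonal]
  rfl

lemma one_sub_smul_eq_cfc (hA : A.IsHermitian) (t : ℝ) :
    1 - t • A = cfc (fun x => 1 - t * x) A := by
  rw [cfc_sub .., cfc_const_mul .., cfc_id' .., cfc_const_one ..]

lemma inv_one_sub_smul_eq_cfc (hA : A.IsHermitian) {t : ℝ}
    (ht : ∀ i, 1 - t * hA.eigenvalues i ≠ 0) :
    (1 - t • A)⁻¹ = cfc (fun x => (1 - t * x)⁻¹) A := by
  have hspec : ∀ x ∈ spectrum ℝ A, 1 - t * x ≠ 0 := by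
    rw [hA.spectrum_real_eq_range_eigenvalues]
    rintro - ⟨i, rfl⟩
    exact ht i
  rw [cfc_inv _ _ hspec (A.finite_real_spectrum.continuousOn _), nonsing_inv_eq_ringInverse,
    hA.one_sub_smul_eq_cfc]

end Matrix.IsHermitian

theorem gammaTol_eq_sum {n : ℕ} {P : Matrix (Fin n) (Fin n) ℝ} (hP : P.IsHermitian) {t : ℝ}
    (ht : ∀ i, 1 - t * hP.eigenvalues i ≠ 0) :
    gammaTol P t = (1 / 2) * ∑ i, gammaTolTerm (t * hP.eigenvalues i) := by
  have hinv : (1 - t • P)⁻¹ - 1 = cfc (fun x => (1 - t * x)⁻¹ - 1) P := by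
    rw [cfc_sub _ _ _ (P.finite_real_spectrum.continuousOn _), cfc_const_one ..,
      hP.inv_one_sub_smul_eq_cfc ht]
  rw [gammaTol, hinv, hP.one_sub_smul_eq_cfc, hP.det_cfc, hP.trace_cfc]
  simp only [RCLike.ofReal_real_eq_id, id_eq]
  rw [Real.log_prod fun i _ => ht i, ← Finset.sum_add_distrib]
  simp only [gammaTolTerm, add_sub_assoc]

theorem gammaTol_strictMonoOn {n : ℕ} {P : Matrix (Fin n) (Fin n) ℝ} (hP : P.PosDef) {lmax : ℝ}
    (hlmax : IsGreatest (range hP.1.eigenvalues) lmax) :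
    StrictMonoOn (gammaTol P) (Ico 0 (1 / lmax)) := by
  obtain ⟨i₀, hi₀⟩ := hlmax.1
  have hlmax_pos : 0 < lmax := hi₀ ▸ hP.eigenvalues_pos i₀
  have hmaps : ∀ i, MapsTo (· * hP.1.eigenvalues i) (Ico 0 (1 / lmax)) (Ico 0 1) := by
    intro i t ht
    refine ⟨mul_nonneg ht.1 (hP.eigenvalues_pos i).le, ?_⟩
    calc t * hP.1.eigenvalues i ≤ t * lmax := by gcongr; exacts [ht.1, hlmax.2 ⟨i, rfl⟩]
      _ < 1 / lmax * lmax := by gcongr; exact ht.2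
      _ = 1 := one_div_mul_cancel hlmax_pos.ne'
  have hterm : ∀ i, StrictMonoOn (fun t => gammaTolTerm (t * hP.1.eigenvalues i))
      (Ico 0 (1 / lmax)) := fun i =>
    gammaTolTerm_strictMonoOn.comp
      ((strictMono_mul_right_of_pos (hP.eigenvalues_pos i)).strictMonoOn _)
      (hmaps i)
  have hne : ∀ t ∈ Ico 0 (1 / lmax), ∀ i, 1 - t * hP.1.eigenvalues i ≠ 0 :=
    fun t ht i => (sub_pos.2 (hmaps i ht).2).ne'
  intro a ha b hb hab
  rw [gammaTol_eq_sum hP.1 (hne a ha), gammaTol_eq_sum hP.1 (hne b hb)]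
  gcongr 1 / 2 * ?_
  exact Finset.sum_lt_sum_of_nonempty ⟨i₀, Finset.mem_univ _⟩ fun i _ => hterm i ha hb hab

theorem theta_of_tolerance_strictMonoOn_general
    {n : ℕ} (P : Matrix (Fin n) (Fin n) ℝ) (hP : P.PosDef)
    (lmax : ℝ) (hlmax : IsGreatest (Set.range hP.1.eigenvalues) lmax)
    (θ : ℝ → ℝ)
    (hθ : ∀ c : ℝ, 0 < c →
      (0 < θ c ∧ θ c < 1 / lmax ∧ gammaTol P (θ c) = c)) :
    StrictMonoOn θ (Set.Ioi (0 : ℝ)) := by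
  intro c₁ hc₁ c₂ hc₂ hc
  obtain ⟨hpos₁, hlt₁, hγ₁⟩ := hθ c₁ hc₁
  obtain ⟨hpos₂, hlt₂, hγ₂⟩ := hθ c₂ hc₂
  rwa [← (gammaTol_strictMonoOn hP hlmax).lt_iff_lt ⟨hpos₁.le, hlt₁⟩ ⟨hpos₂.le, hlt₂⟩, hγ₁, hγ₂]

/-- For a real symmetric positive definite `P` with largest eigenvalue `λmax`, if
`θ(c)` denotes the unique value in `(0, 1/λmax)` with `γ(P, θ(c)) = c` for each
`c > 0`, then `c ↦ θ(c)` is strictly monotone increasing on `(0, ∞)`. -/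
theorem theta_of_tolerance_strictMonoOn
    {n : ℕ} (hn : 0 < n) (P : Matrix (Fin n) (Fin n) ℝ) (hP : P.PosDef)
    (lmax : ℝ) (hlmax : IsGreatest (Set.range hP.1.eigenvalues) lmax)
    (θ : ℝ → ℝ)
    (hθ : ∀ c : ℝ, 0 < c →
      (0 < θ c ∧ θ c < 1 / lmax ∧ gammaTol P (θ c) = c)) :
    StrictMonoOn θ (Set.Ioi (0 : ℝ)) :=
  theta_of_tolerance_strictMonoOn_general P hP lmax hlmax θ hθ
end

section
/- Let P be an n×n real symmetric positive definite matrix and θ ∈ ℝ with 0 < θ < 1/λ_max(P), and set V := (P^{-1} − θI)^{-1}. Then V − P = θ·P·(I − θP)^{-1}·P, and V − P is symmetric positive definite; in particular V ⪰ P in the Loewner order with strict inequality. -/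
/-!
Write `A := 1 - θP`. Since `P⁻¹ - θI = A P⁻¹`, we get `V = P A⁻¹`, hence
`V - P = P A⁻¹ (I - A) = θ P A⁻¹ P`. Every eigenvalue of `P` lies below `1/θ`, so the spectrum
of `A` is positive and `A`, hence `A⁻¹`, is positive definite; the congruence `P A⁻¹ P = Pᴴ A⁻¹ P`
by the invertible `P` keeps it so.
-/

open scoped MatrixOrder ComplexOrder

namespace Matrix

variable {n : Type*} [Fintype n] [DecidableEq n]

theorem IsHermitian.posDef_smul_one_sub {𝕜 : Type*} [RCLike 𝕜] {A : Matrix n n 𝕜}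
    (hA : A.IsHermitian) {c : ℝ} (h : ∀ i, hA.eigenvalues i < c) : (c • 1 - A).PosDef := by
  rw [← isStrictlyPositive_iff_posDef, ← Algebra.algebraMap_eq_smul_one,
    StarOrderedRing.isStrictlyPositive_iff_spectrum_pos (R := ℝ) _
      (.sub (.algebraMap _ (.all c)) hA),
    ← spectrum.singleton_sub_eq, hA.spectrum_real_eq_range_eigenvalues]
  rintro _ ⟨_, rfl, _, ⟨i, rfl⟩, rfl⟩
  exact sub_pos.2 (h i)

theorem inv_inv_sub_smul_one_sub_self {K : Type*} [CommRing K] {P : Matrix n n K}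
    (hP : IsUnit P.det) {θ : K} (hA : IsUnit (1 - θ • P).det) :
    (P⁻¹ - θ • 1)⁻¹ - P = θ • (P * (1 - θ • P)⁻¹ * P) := by
  set A := 1 - θ • P
  have hfactor : P⁻¹ - θ • 1 = A * P⁻¹ := by
    rw [sub_mul, one_mul, smul_mul, mul_nonsing_inv P hP]
  calc (P⁻¹ - θ • 1)⁻¹ - P = P * A⁻¹ - P := by
        rw [hfactor, mul_inv_rev, nonsing_inv_nonsing_inv P hP]
    _ = P * A⁻¹ * (1 - A) := by
        rw [mul_sub, mul_one, mul_assoc, nonsing_inv_mul A hA, mul_one]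
    _ = θ • (P * A⁻¹ * P) := by
        rw [show 1 - A = θ • P by simp [A], Matrix.mul_smul]

end Matrix

open Matrix

/-- Covariance inflation of the robust extended Kalman filter: for a real symmetric
positive definite `P` with largest eigenvalue `λmax`, `0 < θ < 1/λmax`, and
`V := (P⁻¹ − θI)⁻¹`, one has `V − P = θ·P·(I − θP)⁻¹·P` and `V − P` is symmetric
positive definite; in particular `V ⪰ P` in the Loewner order, strictly. -/
theorem robust_covariance_inflation
    {n : ℕ} (P : Matrix (Fin n) (Fin n) ℝ) (hP : P.PosDef)
    (lmax : ℝ) (hlmax : IsGreatest (Set.range hP.1.eigenvalues) lmax)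
    (θ : ℝ) (hθ0 : 0 < θ) (hθ1 : θ < 1 / lmax)
    (V : Matrix (Fin n) (Fin n) ℝ)
    (hV : V = (P⁻¹ - θ • (1 : Matrix (Fin n) (Fin n) ℝ))⁻¹) :
    V - P = θ • (P * ((1 : Matrix (Fin n) (Fin n) ℝ) - θ • P)⁻¹ * P) ∧
    (V - P).PosDef := by
  have hlmax_pos : 0 < lmax := by
    obtain ⟨i, rfl⟩ := hlmax.1
    exact hP.eigenvalues_pos i
  have heig (i : Fin n) : hP.1.eigenvalues i < 1 / θ :=
    (hlmax.2 ⟨i, rfl⟩).trans_lt ((lt_one_div hθ0 hlmax_pos).1 hθ1)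
  have hA : (1 - θ • P).PosDef := by
    simpa [smul_sub, smul_smul, hθ0.ne'] using (hP.1.posDef_smul_one_sub heig).smul hθ0
  have hinflation : V - P = θ • (P * (1 - θ • P)⁻¹ * P) :=
    hV ▸ inv_inv_sub_smul_one_sub_self hP.det_pos.ne'.isUnit hA.det_pos.ne'.isUnit
  refine ⟨hinflation, hinflation ▸ PosDef.smul ?_ hθ0⟩
  simpa only [hP.1.eq] using
    hA.inv.conjTranspose_mul_mul_same (mulVec_injective_iff_isUnit.2 hP.isUnit)
end
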